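/- Let K : ℝ → ℝ³ be standard at infinity, let ξ ∈ ℝ³, u ∈ ℝ, x ∈ ℝ, and assume ξ ≠ u • X. Then, as r → 0 from the right, unit(r⁻¹ • ξ − K(x + u/r)) tends to unit(ξ − u • X). (This is the extension of the Gauss map on the boundary faces of Cnf[𝒦,ℝ³;3,1] where the off-knot point escapes to infinity in the direction ξ while a point on the knot simultaneously escapes to infinity along the knot, or stays fixed when u = 0.) -/
import Mathlib


open Filter Topology

noncomputable section

abbrev R3 := EuclideanSpace ℝ (Fin 3)

/-- Normalization of a vector, with the convention `unit 0 = 0`. -/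
def unit (v : R3) : R3 := ‖v‖⁻¹ • v

/-- The vector `X = (1,0,0)` (the direction of the long knot at infinity). -/
def X : R3 := EuclideanSpace.single 0 1

/-- A long knot is standard at infinity: `K s = s • X` whenever `|s| ≥ 1`. -/
def StdAtInfty (K : ℝ → R3) : Prop := ∀ s : ℝ, 1 ≤ |s| → K s = s • X

lemma unit_smul_pos {c : ℝ} (hc : 0 < c) (v : R3) : unit (c • v) = unit v := by
  unfold unit
  rw [norm_smul, Real.norm_eq_abs, abs_of_pos hc, mul_inv, smul_smul]
  congr 1
  rw [mul_comm c⁻¹, mul_assoc, inv_mul_cancel₀ hc.ne', mul_one]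

lemma continuousAt_unit {v : R3} (hv : v ≠ 0) : ContinuousAt unit v := by
  have : ‖v‖ ≠ 0 := norm_ne_zero_iff.mpr hv
  exact ((continuous_norm.continuousAt).inv₀ this).smul continuousAt_id

/-- The extension of the Gauss map on the faces of `Cnf[𝒦,ℝ³;3,1]` where the
off-knot point escapes to infinity in direction `ξ` while a point on the knot
escapes to infinity along the knot with rate `u` (or stays fixed when `u = 0`):
`unit (r⁻¹ • ξ - K (x + u / r))` tends to `unit (ξ - u • X)` as `r → 0⁺`. -/
theorem gauss_offknot_and_knot_to_infinity (K : ℝ → R3) (hK : StdAtInfty K)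
    (ξ : R3) (u x : ℝ) (h : ξ ≠ u • X) :
    Tendsto (fun r : ℝ => unit (r⁻¹ • ξ - K (x + u / r))) (𝓝[>] 0)
      (𝓝 (unit (ξ - u • X))) := by
  have hne : ξ - u • X ≠ 0 := sub_ne_zero.mpr h
  rcases eq_or_ne u 0 with rfl | hu
  · -- u = 0 case
    have h0 : ξ ≠ 0 := by simpa using h
    have key : (fun r : ℝ => unit (r⁻¹ • ξ - K (x + 0 / r)))
        =ᶠ[𝓝[>] (0:ℝ)] (fun r => unit (ξ - r • K x)) := by
      filter_upwards [self_mem_nhdsWithin] with r hr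
      have hr' : (0 : ℝ) < r := hr
      have : r⁻¹ • ξ - K (x + 0 / r) = r⁻¹ • (ξ - r • K x) := by
        rw [smul_sub, smul_smul, inv_mul_cancel₀ hr'.ne', one_smul]
        simp
      rw [this, unit_smul_pos (inv_pos.mpr hr')]
    have hcont : Tendsto (fun r : ℝ => ξ - r • K x) (𝓝[>] 0) (𝓝 ξ) := by
      have : Tendsto (fun r : ℝ => ξ - r • K x) (𝓝 0) (𝓝 (ξ - (0:ℝ) • K x)) := by
        exact (tendsto_const_nhds.sub ((continuous_id.smul continuous_const).tendsto 0))
      simpa using this.mono_left nhdsWithin_le_nhds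
    have := (continuousAt_unit h0).tendsto.comp hcont
    have goal : Tendsto (fun r : ℝ => unit (ξ - r • K x)) (𝓝[>] 0) (𝓝 (unit ξ)) := this
    simpa using goal.congr' key.symm
  · -- u ≠ 0 case
    set δ := |u| / (1 + |x|) with hδ
    have hδpos : 0 < δ := div_pos (abs_pos.mpr hu) (by positivity)
    have key : (fun r : ℝ => unit (r⁻¹ • ξ - K (x + u / r)))
        =ᶠ[𝓝[>] (0:ℝ)] (fun r => unit ((ξ - u • X) - (r * x) • X)) := by
      filter_upwards [Ioo_mem_nhdsGT_of_mem (by exact ⟨le_refl 0, hδpos⟩ :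
          (0:ℝ) ∈ Set.Ico 0 δ)] with r hr
      obtain ⟨hr0, hrδ⟩ := hr
      have habs : 1 ≤ |x + u / r| := by
        have h1 : |u / r| = |u| / r := by rw [abs_div, abs_of_pos hr0]
        have h2 : 1 + |x| < |u| / r := by
          rw [lt_div_iff₀ hr0]
          calc (1 + |x|) * r < (1 + |x|) * δ := by
                exact mul_lt_mul_of_pos_left hrδ (by positivity)
            _ = |u| := by rw [hδ]; field_simp
        have h3 : |u / r| - |x| ≤ |x + u / r| := by
          have := abs_sub_abs_le_abs_sub (u / r) (-x)
          simpa [add_comm, sub_neg_eq_add, add_comm (u/r) x] using this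
        linarith [h1 ▸ h2, h3]
      have hKs : K (x + u / r) = (x + u / r) • X := hK _ habs
      have hr0' : r ≠ 0 := hr0.ne'
      have heq : r⁻¹ • ξ - K (x + u / r) = r⁻¹ • ((ξ - u • X) - (r * x) • X) := by
        rw [hKs]
        match_scalars <;> field_simp <;> ring
      rw [heq, unit_smul_pos (inv_pos.mpr hr0)]
    have hcont : Tendsto (fun r : ℝ => (ξ - u • X) - (r * x) • X) (𝓝[>] 0)
        (𝓝 (ξ - u • X)) := by
      have : Tendsto (fun r : ℝ => (ξ - u • X) - (r * x) • X) (𝓝 0)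
          (𝓝 ((ξ - u • X) - ((0:ℝ) * x) • X)) := by
        exact tendsto_const_nhds.sub
          (((continuous_id.mul continuous_const).smul continuous_const).tendsto 0)
      simpa using this.mono_left nhdsWithin_le_nhds
    exact ((continuousAt_unit hne).tendsto.comp hcont).congr' key.symm

end
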